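/- Suppose (g,K,θ) satisfies condition (E). Fix β ∈ (0, θ/2], let n ≥ 0 be finite, and let (x_i)_{i=0}^n be a β-pseudoorbit for g contained in B(K, θ/4). Then there exists a point x ∈ Z that β-shadows the pseudoorbit, i.e. ρ(g^i(x), x_i) ≤ β for all 0 ≤ i ≤ n. -/
import Mathlib


/-- Condition (E): for every `x` in the closed `θ`-neighborhood of `K` and every `y`
with `ρ(x,y) ≤ θ`, one has `ρ(g(x),g(y)) ≥ 2ρ(x,y)`; moreover `g` is injective on
`B(x,θ)` and `g(B(x,θ)) ⊇ B(g(x),2θ)`. -/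
def CondE {Z : Type*} [MetricSpace Z] (g : Z → Z) (K : Set Z) (θ : ℝ) : Prop :=
  ∀ x : Z, Metric.infDist x K ≤ θ →
    (∀ y : Z, dist x y ≤ θ → 2 * dist x y ≤ dist (g x) (g y)) ∧
    Set.InjOn g (Metric.ball x θ) ∧
    Metric.ball (g x) (2 * θ) ⊆ g '' Metric.ball x θ

/-- Lemma 4.5 (a)-(d): every finite `β`-pseudoorbit (with `β ∈ (0, θ/2]`) contained
in the open `θ/4`-neighborhood of `K` is `β`-shadowed by some point. -/
theorem stmt4 {Z : Type*} [MetricSpace Z] [CompactSpace Z]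
    (g : Z → Z) (hg : Continuous g)
    (K : Set Z) (hK : IsCompact K) (hKne : K.Nonempty)
    (θ : ℝ) (hθ : 0 < θ) (hE : CondE g K θ)
    (β : ℝ) (hβ : 0 < β) (hβθ : β ≤ θ / 2)
    (n : ℕ) (x : ℕ → Z)
    (hpseudo : ∀ i < n, dist (g (x i)) (x (i + 1)) ≤ β)
    (hin : ∀ i ≤ n, Metric.infDist (x i) K < θ / 4) :
    ∃ p : Z, ∀ i ≤ n, dist (g^[i] p) (x i) ≤ β := by
  have key : ∀ k, k ≤ n → ∃ p, ∀ i ≤ k, dist (g^[i] p) (x (n - k + i)) ≤ β := by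
    intro k
    induction k with
    | zero =>
      intro _
      refine ⟨x n, ?_⟩
      intro i hi
      interval_cases i
      simp [hβ.le]
    | succ k ih =>
      intro hk
      obtain ⟨p, hp⟩ := ih (Nat.le_of_succ_le hk)
      set j := n - (k + 1) with hj
      have hjn : j ≤ n := Nat.sub_le _ _
      have hjlt : j < n := by omega
      have hj1 : j + 1 = n - k := by omega
      have hdle : Metric.infDist (x j) K ≤ θ := by
        have := hin j hjn; linarith
      obtain ⟨hexp, _, hsurj⟩ := hE (x j) hdle
      have hp0 : dist p (x (j + 1)) ≤ β := by
        have := hp 0 (Nat.zero_le _)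
        simpa [hj1] using this
      have hdgp : dist (g (x j)) p ≤ 2 * β := by
        have h1 := hpseudo j hjlt
        have h2 := dist_triangle (g (x j)) (x (j + 1)) p
        rw [dist_comm p] at hp0
        linarith
      have hmem : p ∈ Metric.ball (g (x j)) (2 * θ) := by
        rw [Metric.mem_ball]
        have : 2 * β ≤ 2 * (θ / 2) := by linarith
        calc dist p (g (x j)) = dist (g (x j)) p := dist_comm _ _
          _ ≤ 2 * β := hdgp
          _ < 2 * θ := by linarith
      obtain ⟨q, hq, hgq⟩ := hsurj hmem
      have hqd : dist (x j) q ≤ θ := le_of_lt (by simpa [dist_comm] using hq)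
      have hqβ : dist q (x j) ≤ β := by
        have := hexp q hqd
        rw [hgq] at this
        rw [dist_comm]
        linarith
      refine ⟨q, ?_⟩
      intro i hi
      cases i with
      | zero => simpa using hqβ
      | succ i' =>
        have hi' : i' ≤ k := Nat.succ_le_succ_iff.mp hi
        have : g^[i' + 1] q = g^[i'] p := by
          rw [Function.iterate_succ_apply, hgq]
        rw [this]
        have hidx : n - (k + 1) + (i' + 1) = n - k + i' := by omega
        rw [hidx]
        exact hp i' hi'
  obtain ⟨p, hp⟩ := key n le_rfl
  exact ⟨p, fun i hi => by simpa using hp i hi⟩
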